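/- arXiv:2410.05504 — 5 statements merged into one kernel-verified Lean document; each statement's English description precedes it below -/
import Mathlib

section
/- Binary improvement theorem: Let σ* be an obedient experiment and let (σ̄, σ̲, λ) be a Pareto-ranked splitting of σ* with u_s(σ̄, τ*) > u_s(σ̲, τ*). Define the binary ambiguous experiment (σ, μ) with σ = (σ̄, σ̲) and μ̄ = λφ_r'(u_r(σ̲, τ*)) / [λφ_r'(u_r(σ̲, τ*)) + (1−λ)φ_r'(u_r(σ̄, τ*))]. Then: (i) (σ, μ) is obedient; (ii) U_r(σ, μ, τ*) > u_r(σ*, τ*) if and only if μ̄ > λ; (iii) U_s(σ, μ, τ*) > u_s(σ*, τ*) if and only if the sender's ((σ̄, σ̲), λ)-probability premium ρ^{φ_s,u_s}((σ̄, σ̲), λ) is strictly less than μ̄ − λ. Moreover, ρ^{φ_s,u_s}((σ̄, σ̲), λ) weakly increases when φ_s is replaced by φ◦φ_s for any strictly increasing, concave, differentiable φ, and μ̄ weakly increases when φ_r is replaced by φ◦φ_r for any strictly increasing, concave, differentiable φ. -/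
open Finset

/-- A stochastic kernel from `X` to `Y`: each row `k x` is a probability vector on `Y`.
An experiment is a kernel from states `Ω` to messages; a receiver strategy is a kernel
from messages to actions `A`. -/
def IsKernel {X Y : Type*} [Fintype Y] (k : X → Y → ℝ) : Prop :=
  (∀ x y, 0 ≤ k x y) ∧ ∀ x, ∑ y, k x y = 1

/-- A probability vector on a finite type. -/
def IsProb {Θ : Type*} [Fintype Θ] (μ : Θ → ℝ) : Prop :=
  (∀ θ, 0 ≤ μ θ) ∧ ∑ θ, μ θ = 1

/-- The obedient strategy `τ*`: take the recommended action with probability one. -/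
noncomputable def tauStar {A : Type*} [DecidableEq A] : A → A → ℝ :=
  fun m a => if a = m then (1 : ℝ) else 0

/-- Expected payoff `u_i(σ, τ) = ∑_{ω,m,a} p(ω) σ(m|ω) τ(a|m) u_i(a,ω)`. -/
noncomputable def expPayoff {Ω M A : Type*} [Fintype Ω] [Fintype M] [Fintype A]
    (p : Ω → ℝ) (u : A → Ω → ℝ) (σ : Ω → M → ℝ) (τ : M → A → ℝ) : ℝ :=
  ∑ ω, ∑ m, ∑ a, p ω * σ ω m * τ m a * u a ω

/-- Obedience of a single (unambiguous) canonical experiment: `τ*` is a best reply. -/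
def Obedient {Ω A : Type*} [Fintype Ω] [Fintype A] [DecidableEq A]
    (p : Ω → ℝ) (ur : A → Ω → ℝ) (σ : Ω → A → ℝ) : Prop :=
  ∀ τ : A → A → ℝ, IsKernel τ → expPayoff p ur σ τ ≤ expPayoff p ur σ tauStar

/-- Obedience of an ambiguous experiment `(σ, μ)` for a smooth-ambiguity receiver with
index `φr`:  `τ*` maximizes `τ ↦ U_r(σ, μ, τ) = φr⁻¹(∑_θ μ_θ φr(u_r(σ_θ, τ)))`; since `φr`
is strictly increasing this is equivalent to `τ*` maximizing `τ ↦ ∑_θ μ_θ φr(u_r(σ_θ, τ))`. -/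
def AmbObedient {Ω A Θ : Type*} [Fintype Ω] [Fintype A] [DecidableEq A] [Fintype Θ]
    (φr : ℝ → ℝ) (p : Ω → ℝ) (ur : A → Ω → ℝ) (σ : Θ → Ω → A → ℝ) (μ : Θ → ℝ) : Prop :=
  ∀ τ : A → A → ℝ, IsKernel τ →
    ∑ θ, μ θ * φr (expPayoff p ur (σ θ) τ) ≤ ∑ θ, μ θ * φr (expPayoff p ur (σ θ) tauStar)

/-- A smooth ambiguity index: strictly increasing, concave, differentiable. -/
def SmoothIndex (φ : ℝ → ℝ) : Prop :=
  StrictMono φ ∧ ConcaveOn ℝ Set.univ φ ∧ Differentiable ℝ φ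

/-- Two experiments are (strictly) Pareto ranked: under obedience, sender and receiver
strictly rank them the same way. -/
def ParetoRanked {Ω A : Type*} [Fintype Ω] [Fintype A] [DecidableEq A]
    (p : Ω → ℝ) (us ur : A → Ω → ℝ) (σ σ' : Ω → A → ℝ) : Prop :=
  (expPayoff p us σ' tauStar < expPayoff p us σ tauStar ∧
      expPayoff p ur σ' tauStar < expPayoff p ur σ tauStar) ∨
  (expPayoff p us σ tauStar < expPayoff p us σ' tauStar ∧
      expPayoff p ur σ tauStar < expPayoff p ur σ' tauStar)

/-- Two experiments are weakly Pareto ranked. -/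
def WeaklyParetoRanked {Ω A : Type*} [Fintype Ω] [Fintype A] [DecidableEq A]
    (p : Ω → ℝ) (us ur : A → Ω → ℝ) (σ σ' : Ω → A → ℝ) : Prop :=
  (expPayoff p us σ' tauStar ≤ expPayoff p us σ tauStar ∧
      expPayoff p ur σ' tauStar ≤ expPayoff p ur σ tauStar) ∨
  (expPayoff p us σ tauStar ≤ expPayoff p us σ' tauStar ∧
      expPayoff p ur σ tauStar ≤ expPayoff p ur σ' tauStar)

/-- Pointwise convex combination of two experiments. -/
noncomputable def mixExp {Ω A : Type*} (lam : ℝ) (σ1 σ2 : Ω → A → ℝ) : Ω → A → ℝ :=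
  fun ω a => lam * σ1 ω a + (1 - lam) * σ2 ω a

/-- `(σbar, σlo, lam)` is a Pareto-ranked splitting of the experiment `σ`. -/
def ParetoRankedSplitting {Ω A : Type*} [Fintype Ω] [Fintype A] [DecidableEq A]
    (p : Ω → ℝ) (us ur : A → Ω → ℝ) (σbar σlo : Ω → A → ℝ) (lam : ℝ) (σ : Ω → A → ℝ) : Prop :=
  IsKernel σbar ∧ IsKernel σlo ∧ lam ∈ Set.Ioo (0 : ℝ) 1 ∧
    mixExp lam σbar σlo = σ ∧ ParetoRanked p us ur σbar σlo

/-- The `((σbar, σlo), lam)`-probability premium of a player with utility `u` and index `φ`. -/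
noncomputable def probPremium {Ω A : Type*} [Fintype Ω] [Fintype A] [DecidableEq A]
    (p : Ω → ℝ) (u : A → Ω → ℝ) (φ : ℝ → ℝ) (σbar σlo : Ω → A → ℝ) (lam : ℝ) : ℝ :=
  (φ (expPayoff p u (mixExp lam σbar σlo) tauStar) -
      lam * φ (expPayoff p u σbar tauStar) - (1 - lam) * φ (expPayoff p u σlo tauStar)) /
    (φ (expPayoff p u σbar tauStar) - φ (expPayoff p u σlo tauStar))

/-- The set of `φs`-transformed sender values attainable by obedient ambiguous experiments;
the value of the sender's problem `(P)` equals `u` iff `φs u` is the least upper bound of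
this set (since `φs` is continuous and strictly increasing). -/
def senderValues {Ω A : Type*} [Fintype Ω] [Fintype A] [DecidableEq A]
    (φs φr : ℝ → ℝ) (p : Ω → ℝ) (us ur : A → Ω → ℝ) : Set ℝ :=
  {x | ∃ (n : ℕ) (σ : Fin n → Ω → A → ℝ) (μ : Fin n → ℝ),
    (∀ j, IsKernel (σ j)) ∧ IsProb μ ∧ AmbObedient φr p ur σ μ ∧
    x = ∑ j, μ j * φs (expPayoff p us (σ j) tauStar)}

/-- The set of feasible values of the auxiliary program `(Φ*(u))`: sums
`∑_θ λ_θ Φ_u(σ_θ)` over splittings `(λ_θ, σ_θ)` of obedient experiments, where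
`Φ_u(σ) = (φs(u_s(σ,τ*)) − φs(u)) / φr'(u_r(σ,τ*))`. -/
def phiProgram {Ω A : Type*} [Fintype Ω] [Fintype A] [DecidableEq A]
    (φs φr : ℝ → ℝ) (p : Ω → ℝ) (us ur : A → Ω → ℝ) (u : ℝ) : Set ℝ :=
  {x | ∃ (n : ℕ) (σ : Fin n → Ω → A → ℝ) (lam : Fin n → ℝ),
    (∀ j, IsKernel (σ j)) ∧ IsProb lam ∧
    Obedient p ur (fun ω a => ∑ j, lam j * σ j ω a) ∧
    x = ∑ j, lam j * ((φs (expPayoff p us (σ j) tauStar) - φs u) /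
      deriv φr (expPayoff p ur (σ j) tauStar))}
/-! Write `R̄ > R̲` for the receiver's payoffs from `σ̄`, `σ̲` and `d̄ = φr'(R̄) ≤ d̲ = φr'(R̲)`.
The weight `μ̄` is exactly the one with `μ̄ d̄ : (1 - μ̄) d̲ = λ : (1 - λ)`. Bounding `φr` by its
tangents at `R̄` and `R̲`, the ambiguous receiver's gain from a deviation is therefore at most a
positive multiple of the gain the same deviation yields under `σ* = λ σ̄ + (1 - λ) σ̲`, which
obedience of `σ*` makes nonpositive. The same tangent bound at `φr(u_r(σ*))` shows that the
receiver never loses, and gains exactly when `d̄ < d̲`, i.e. when `μ̄ > λ`. The sender's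
criterion is algebra. For the comparative statics, a concave `φ` raises the relative position
of `φs(u_s(σ*))` between `φs(u_s(σ̲))` and `φs(u_s(σ̄))`, and lowers the ratio
`φ'(φr R̄) / φ'(φr R̲)`. -/

namespace ConcaveOn

variable {φ : ℝ → ℝ}

theorem le_add_deriv_mul_sub (hc : ConcaveOn ℝ Set.univ φ) (hd : Differentiable ℝ φ) (x y : ℝ) :
    φ y ≤ φ x + deriv φ x * (y - x) := by
  rcases lt_trichotomy x y with hxy | rfl | hyx
  · have hslope := hc.slope_le_deriv (Set.mem_univ x) (Set.mem_univ y) hxy (hd x)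
    rw [slope_def_field, div_le_iff₀ (sub_pos.2 hxy)] at hslope
    linarith
  · simp
  · have hslope := hc.deriv_le_slope (Set.mem_univ y) (Set.mem_univ x) hyx (hd x)
    rw [slope_def_field, le_div_iff₀ (sub_pos.2 hyx)] at hslope
    linarith

theorem deriv_eq_of_eq_add_deriv_mul_sub (hc : ConcaveOn ℝ Set.univ φ) (hd : Differentiable ℝ φ)
    {x y : ℝ} (heq : φ y = φ x + deriv φ x * (y - x)) : deriv φ y = deriv φ x := by
  set gap : ℝ → ℝ := fun z => φ x + deriv φ x * (z - x) - φ z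
  have hmin : IsLocalMin gap y := Filter.Eventually.of_forall fun z => by
    simp only [gap, heq]
    linarith [hc.le_add_deriv_mul_sub hd x z]
  have hgap : HasDerivAt gap (deriv φ x - deriv φ y) y := by
    have hline : HasDerivAt (fun z => φ x + deriv φ x * (z - x)) (deriv φ x) y := by
      simpa using (((hasDerivAt_id y).sub_const x).const_mul (deriv φ x)).const_add (φ x)
    exact hline.sub (hd y).hasDerivAt
  linarith [hgap.deriv ▸ hmin.deriv_eq_zero]

theorem weighted_le_of_deriv_proportional (hc : ConcaveOn ℝ Set.univ φ) (hd : Differentiable ℝ φ)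
    {w₁ w₂ k t x₁ x₂ y₁ y₂ : ℝ} (hw₁ : 0 ≤ w₁) (hw₂ : 0 ≤ w₂) (hk : 0 ≤ k)
    (h₁ : w₁ * deriv φ x₁ = k * t) (h₂ : w₂ * deriv φ x₂ = k * (1 - t))
    (hy : t * y₁ + (1 - t) * y₂ ≤ t * x₁ + (1 - t) * x₂) :
    w₁ * φ y₁ + w₂ * φ y₂ ≤ w₁ * φ x₁ + w₂ * φ x₂ := by
  have hT₁ := mul_le_mul_of_nonneg_left (hc.le_add_deriv_mul_sub hd x₁ y₁) hw₁
  have hT₂ := mul_le_mul_of_nonneg_left (hc.le_add_deriv_mul_sub hd x₂ y₂) hw₂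
  have hsum : w₁ * (φ x₁ + deriv φ x₁ * (y₁ - x₁)) + w₂ * (φ x₂ + deriv φ x₂ * (y₂ - x₂)) =
      w₁ * φ x₁ + w₂ * φ x₂ + k * (t * y₁ + (1 - t) * y₂ - (t * x₁ + (1 - t) * x₂)) := by
    linear_combination (y₁ - x₁) * h₁ + (y₂ - x₂) * h₂
  nlinarith [mul_nonpos_of_nonneg_of_nonpos hk (sub_nonpos.2 hy)]

theorem lt_weighted_of_deriv_proportional (hc : ConcaveOn ℝ Set.univ φ) (hd : Differentiable ℝ φ)
    {w₁ w₂ k t x₁ x₂ y : ℝ} (hw₁ : 0 < w₁) (hw₂ : 0 < w₂)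
    (h₁ : w₁ * deriv φ x₁ = k * t) (h₂ : w₂ * deriv φ x₂ = k * (1 - t))
    (hne : deriv φ x₁ ≠ deriv φ x₂) (hy : y = t * x₁ + (1 - t) * x₂) :
    (w₁ + w₂) * φ y < w₁ * φ x₁ + w₂ * φ x₂ := by
  have hT₁ := hc.le_add_deriv_mul_sub hd x₁ y
  have hT₂ := hc.le_add_deriv_mul_sub hd x₂ y
  have hstrict : φ y < φ x₁ + deriv φ x₁ * (y - x₁) ∨ φ y < φ x₂ + deriv φ x₂ * (y - x₂) := by
    by_contra! hboth
    exact hne ((hc.deriv_eq_of_eq_add_deriv_mul_sub hd (le_antisymm hT₁ hboth.1)).symm.trans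
      (hc.deriv_eq_of_eq_add_deriv_mul_sub hd (le_antisymm hT₂ hboth.2)))
  have hbalance : w₁ * (deriv φ x₁ * (y - x₁)) + w₂ * (deriv φ x₂ * (y - x₂)) = 0 := by
    rw [hy]; linear_combination (1 - t) * (x₂ - x₁) * h₁ + t * (x₁ - x₂) * h₂
  rcases hstrict with hlt | hlt
  · nlinarith [mul_lt_mul_of_pos_left hlt hw₁, mul_le_mul_of_nonneg_left hT₂ hw₂.le]
  · nlinarith [mul_le_mul_of_nonneg_left hT₁ hw₁.le, mul_lt_mul_of_pos_left hlt hw₂]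

theorem sub_div_sub_le (hc : ConcaveOn ℝ Set.univ φ) {a b c : ℝ} (hbc : b ≤ c) (hca : c ≤ a)
    (hφ : φ b < φ a) : (c - b) / (a - b) ≤ (φ c - φ b) / (φ a - φ b) := by
  have hab : 0 < a - b := sub_pos.2 <| (hbc.trans hca).lt_of_ne fun h => hφ.ne (h ▸ rfl)
  set s := (c - b) / (a - b)
  have hs₀ : 0 ≤ s := div_nonneg (sub_nonneg.2 hbc) hab.le
  have hs₁ : s ≤ 1 := (div_le_one hab).2 (by linarith)
  have hc_eq : s * a + (1 - s) * b = c := by simp only [s]; field_simp; ring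
  have hconc := hc.2 (Set.mem_univ a) (Set.mem_univ b) hs₀ (sub_nonneg.2 hs₁) (add_sub_cancel s 1)
  simp only [smul_eq_mul, hc_eq] at hconc
  rw [le_div_iff₀ (sub_pos.2 hφ)]
  linarith

end ConcaveOn

theorem SmoothIndex.deriv_pos {φ : ℝ → ℝ} (h : SmoothIndex φ) (x : ℝ) : 0 < deriv φ x := by
  have htangent := h.2.1.le_add_deriv_mul_sub h.2.2 x (x + 1)
  have hincr := h.1 (lt_add_one x)
  linarith

theorem premium_eq_sub_div_sub_sub {a b c : ℝ} (lam : ℝ) (hab : a ≠ b) :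
    (c - lam * a - (1 - lam) * b) / (a - b) = (c - b) / (a - b) - lam := by
  field_simp [sub_ne_zero.2 hab]
  ring

theorem premium_lt_sub_iff {a b c lam μ : ℝ} (hab : b < a) :
    (c - lam * a - (1 - lam) * b) / (a - b) < μ - lam ↔ c < μ * a + (1 - μ) * b := by
  rw [div_lt_iff₀ (sub_pos.2 hab)]
  constructor <;> intro h <;> linarith

theorem ConcaveOn.premium_le_premium_comp {φ : ℝ → ℝ} (hc : ConcaveOn ℝ Set.univ φ)
    {a b c : ℝ} (lam : ℝ) (hbc : b ≤ c) (hca : c ≤ a) (hab : b < a) (hφ : φ b < φ a) :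
    (c - lam * a - (1 - lam) * b) / (a - b) ≤
      (φ c - lam * φ a - (1 - lam) * φ b) / (φ a - φ b) := by
  rw [premium_eq_sub_div_sub_sub lam hab.ne', premium_eq_sub_div_sub_sub lam hφ.ne']
  exact sub_le_sub_right (hc.sub_div_sub_le hbc hca hφ) lam

/-- The weight `μ` with `μ d₂ : (1 - μ) d₁ = lam : (1 - lam)`; this is `μ̄` for
`d₁ = φr'(u_r(σ̲, τ*))`, `d₂ = φr'(u_r(σ̄, τ*))`. -/
noncomputable def balancedWeight (lam d₁ d₂ : ℝ) : ℝ :=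
  lam * d₁ / (lam * d₁ + (1 - lam) * d₂)

section balancedWeight

variable {lam d₁ d₂ : ℝ}

theorem balancedWeight_mul (hD : lam * d₁ + (1 - lam) * d₂ ≠ 0) :
    balancedWeight lam d₁ d₂ * d₂ = d₁ * d₂ / (lam * d₁ + (1 - lam) * d₂) * lam := by
  unfold balancedWeight
  field_simp

theorem one_sub_balancedWeight_mul (hD : lam * d₁ + (1 - lam) * d₂ ≠ 0) :
    (1 - balancedWeight lam d₁ d₂) * d₁ =
      d₁ * d₂ / (lam * d₁ + (1 - lam) * d₂) * (1 - lam) := by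
  unfold balancedWeight
  field_simp
  ring

theorem balancedWeight_mem_Ioo (hlam : lam ∈ Set.Ioo 0 1) (hd₁ : 0 < d₁) (hd₂ : 0 < d₂) :
    balancedWeight lam d₁ d₂ ∈ Set.Ioo 0 1 := by
  have hD : 0 < lam * d₁ + (1 - lam) * d₂ := by nlinarith [hlam.1, hlam.2]
  refine ⟨div_pos (mul_pos hlam.1 hd₁) hD, (div_lt_one hD).2 ?_⟩
  nlinarith [hlam.2]

theorem lt_balancedWeight_iff (hlam : lam ∈ Set.Ioo 0 1) (hd₁ : 0 < d₁) (hd₂ : 0 < d₂) :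
    lam < balancedWeight lam d₁ d₂ ↔ d₂ < d₁ := by
  have hD : 0 < lam * d₁ + (1 - lam) * d₂ := by nlinarith [hlam.1, hlam.2]
  have hlam' : 0 < lam * (1 - lam) := mul_pos hlam.1 (sub_pos.2 hlam.2)
  rw [balancedWeight, lt_div_iff₀ hD]
  constructor <;> intro h <;> nlinarith

theorem balancedWeight_le_balancedWeight_mul (hlam : lam ∈ Set.Icc 0 1) (hd₁ : 0 < d₁)
    (hd₂ : 0 < d₂) {c₁ c₂ : ℝ} (hc₂ : 0 < c₂) (hc : c₂ ≤ c₁) :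
    balancedWeight lam d₁ d₂ ≤ balancedWeight lam (c₁ * d₁) (c₂ * d₂) := by
  have hc₁ : 0 < c₁ := hc₂.trans_le hc
  unfold balancedWeight
  rcases hlam.1.eq_or_lt with rfl | hlam₀
  · simp
  have hD : 0 < lam * d₁ + (1 - lam) * d₂ := by nlinarith [hlam.2]
  have hD' : 0 < lam * (c₁ * d₁) + (1 - lam) * (c₂ * d₂) := by
    nlinarith [mul_pos hc₁ hd₁, mul_pos hc₂ hd₂, hlam.2]
  rw [div_le_div_iff₀ hD hD']
  nlinarith [mul_nonneg (mul_nonneg (mul_nonneg hlam.1 (sub_nonneg.2 hlam.2))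
    (mul_pos hd₁ hd₂).le) (sub_nonneg.2 hc)]

end balancedWeight

theorem SmoothIndex.apply_mix_lt_balanced_mix_iff {φ : ℝ → ℝ} (hφ : SmoothIndex φ)
    {lam x y : ℝ} (hxy : x < y) (hlam : lam ∈ Set.Ioo 0 1) :
    φ (lam * y + (1 - lam) * x) <
        balancedWeight lam (deriv φ x) (deriv φ y) * φ y +
          (1 - balancedWeight lam (deriv φ x) (deriv φ y)) * φ x ↔
      lam < balancedWeight lam (deriv φ x) (deriv φ y) := by
  have hdx := hφ.deriv_pos x
  have hdy := hφ.deriv_pos y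
  obtain ⟨hmono, hconc, hdiff⟩ := hφ
  have hμ := balancedWeight_mem_Ioo hlam hdx hdy
  have hD : lam * deriv φ x + (1 - lam) * deriv φ y ≠ 0 := by nlinarith [hlam.1, hlam.2]
  constructor
  · intro hlt
    have hconcave := hconc.2 (Set.mem_univ y) (Set.mem_univ x) hlam.1.le (sub_nonneg.2 hlam.2.le)
      (add_sub_cancel lam 1)
    simp only [smul_eq_mul] at hconcave
    nlinarith [hmono hxy]
  · intro hlt
    have hne := ((lt_balancedWeight_iff hlam hdx hdy).1 hlt).ne
    simpa using hconc.lt_weighted_of_deriv_proportional hdiff hμ.1 (sub_pos.2 hμ.2)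
      (balancedWeight_mul hD) (one_sub_balancedWeight_mul hD) hne rfl

theorem expPayoff_mixExp {Ω M A : Type*} [Fintype Ω] [Fintype M] [Fintype A]
    (p : Ω → ℝ) (u : A → Ω → ℝ) (lam : ℝ) (σ₁ σ₂ : Ω → M → ℝ) (τ : M → A → ℝ) :
    expPayoff p u (mixExp lam σ₁ σ₂) τ =
      lam * expPayoff p u σ₁ τ + (1 - lam) * expPayoff p u σ₂ τ := by
  simp only [expPayoff, mixExp, Finset.mul_sum, ← Finset.sum_add_distrib]
  refine Finset.sum_congr rfl fun _ _ => Finset.sum_congr rfl fun _ _ =>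
    Finset.sum_congr rfl fun _ _ => by ring

theorem Obedient.ambObedient_split {Ω A : Type*} [Fintype Ω] [Fintype A] [DecidableEq A]
    {p : Ω → ℝ} {ur : A → Ω → ℝ} {φr : ℝ → ℝ} {σbar σlo : Ω → A → ℝ} {lam : ℝ}
    (hobed : Obedient p ur (mixExp lam σbar σlo)) (hφr : SmoothIndex φr)
    (hlam : lam ∈ Set.Ioo 0 1) :
    let μ := balancedWeight lam (deriv φr (expPayoff p ur σlo tauStar))
      (deriv φr (expPayoff p ur σbar tauStar))
    AmbObedient φr p ur (fun b : Bool => if b then σbar else σlo)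
      (fun b : Bool => if b then μ else 1 - μ) := by
  intro μ τ hτ
  have hdlo := hφr.deriv_pos (expPayoff p ur σlo tauStar)
  have hdbar := hφr.deriv_pos (expPayoff p ur σbar tauStar)
  have hμ := balancedWeight_mem_Ioo hlam hdlo hdbar
  have hD : 0 < lam * deriv φr (expPayoff p ur σlo tauStar) +
      (1 - lam) * deriv φr (expPayoff p ur σbar tauStar) := by
    nlinarith [hlam.1, hlam.2]
  have hdev := hobed τ hτ
  rw [expPayoff_mixExp, expPayoff_mixExp] at hdev
  simp only [Fintype.sum_bool, if_true, Bool.false_eq_true, if_false]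
  exact hφr.2.1.weighted_le_of_deriv_proportional hφr.2.2 hμ.1.le (sub_pos.2 hμ.2).le
    (div_nonneg (mul_pos hdlo hdbar).le hD.le)
    (balancedWeight_mul hD.ne') (one_sub_balancedWeight_mul hD.ne') hdev

theorem binary_improvement_general
    {Ω A : Type*} [Fintype Ω] [Fintype A] [DecidableEq A]
    (p : Ω → ℝ) (us ur : A → Ω → ℝ)
    (φs φr : ℝ → ℝ) (hφs : SmoothIndex φs) (hφr : SmoothIndex φr)
    (σstar σbar σlo : Ω → A → ℝ) (lam : ℝ)
    (hobed : Obedient p ur σstar)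
    (hsplit : ParetoRankedSplitting p us ur σbar σlo lam σstar)
    (hs : expPayoff p us σlo tauStar < expPayoff p us σbar tauStar)
    (μbar : ℝ)
    (hμbar : μbar = lam * deriv φr (expPayoff p ur σlo tauStar) /
      (lam * deriv φr (expPayoff p ur σlo tauStar) +
        (1 - lam) * deriv φr (expPayoff p ur σbar tauStar))) :
    AmbObedient φr p ur (fun b : Bool => if b then σbar else σlo)
        (fun b : Bool => if b then μbar else 1 - μbar) ∧
    (φr (expPayoff p ur σstar tauStar) <
        μbar * φr (expPayoff p ur σbar tauStar) + (1 - μbar) * φr (expPayoff p ur σlo tauStar)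
      ↔ lam < μbar) ∧
    (φs (expPayoff p us σstar tauStar) <
        μbar * φs (expPayoff p us σbar tauStar) + (1 - μbar) * φs (expPayoff p us σlo tauStar)
      ↔ probPremium p us φs σbar σlo lam < μbar - lam) ∧
    (∀ φ : ℝ → ℝ, SmoothIndex φ →
      probPremium p us φs σbar σlo lam ≤ probPremium p us (φ ∘ φs) σbar σlo lam) ∧
    (∀ φ : ℝ → ℝ, SmoothIndex φ →
      μbar ≤ lam * deriv (φ ∘ φr) (expPayoff p ur σlo tauStar) /
        (lam * deriv (φ ∘ φr) (expPayoff p ur σlo tauStar) +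
          (1 - lam) * deriv (φ ∘ φr) (expPayoff p ur σbar tauStar))) := by
  obtain ⟨-, -, hlam, hmix, hpareto⟩ := hsplit
  subst hmix hμbar
  have hr : expPayoff p ur σlo tauStar < expPayoff p ur σbar tauStar :=
    (hpareto.resolve_right fun h => lt_asymm hs h.1).2
  refine ⟨hobed.ambObedient_split hφr hlam, ?_, ?_, fun φ hφ => ?_, fun φ hφ => ?_⟩
  · rw [expPayoff_mixExp]
    exact hφr.apply_mix_lt_balanced_mix_iff hr hlam
  · rw [probPremium, expPayoff_mixExp]
    exact (premium_lt_sub_iff (hφs.1 hs)).symm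
  · simp only [probPremium, expPayoff_mixExp, Function.comp_apply]
    exact hφ.2.1.premium_le_premium_comp lam (hφs.1.monotone (by nlinarith [hlam.1, hlam.2]))
      (hφs.1.monotone (by nlinarith [hlam.1, hlam.2])) (hφs.1 hs) (hφ.1 (hφs.1 hs))
  · simp only [deriv_comp _ (hφ.2.2 _) (hφr.2.2 _)]
    exact balancedWeight_le_balancedWeight_mul (Set.Ioo_subset_Icc_self hlam) (hφr.deriv_pos _)
      (hφr.deriv_pos _) (hφ.deriv_pos _) (hφ.2.1.antitoneOn_deriv (fun z _ => hφ.2.2 z)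
        (Set.mem_univ _) (Set.mem_univ _) (hφr.1 hr).le)

/-- Theorem 4, binary improvement: let `σstar` be obedient and
`(σbar, σlo, lam)` a Pareto-ranked splitting of it with `u_s(σbar,τ*) > u_s(σlo,τ*)`, and
let `μbar = lam φr'(u_r(σlo,τ*)) / (lam φr'(u_r(σlo,τ*)) + (1−lam) φr'(u_r(σbar,τ*)))`.
Then (i) the binary ambiguous experiment is obedient; (ii) the receiver strictly gains
over `σstar` iff `μbar > lam`; (iii) the sender strictly gains over `σstar` iff the
sender's probability premium is `< μbar − lam`; moreover the sender's probability premium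
weakly increases under more sender ambiguity aversion (`φ ∘ φs`), and `μbar` weakly
increases under more receiver ambiguity aversion (`φ ∘ φr`).  (Strict payoff comparisons
involving `φ⁻¹` are stated equivalently through the strictly increasing `φs`, `φr`.) -/
theorem binary_improvement
    {Ω A : Type*} [Fintype Ω] [Fintype A] [DecidableEq A]
    (p : Ω → ℝ) (hp : IsProb p) (us ur : A → Ω → ℝ)
    (φs φr : ℝ → ℝ) (hφs : SmoothIndex φs) (hφr : SmoothIndex φr)
    (σstar σbar σlo : Ω → A → ℝ) (lam : ℝ)
    (hσstar : IsKernel σstar) (hobed : Obedient p ur σstar)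
    (hsplit : ParetoRankedSplitting p us ur σbar σlo lam σstar)
    (hs : expPayoff p us σlo tauStar < expPayoff p us σbar tauStar)
    (μbar : ℝ)
    (hμbar : μbar = lam * deriv φr (expPayoff p ur σlo tauStar) /
      (lam * deriv φr (expPayoff p ur σlo tauStar) +
        (1 - lam) * deriv φr (expPayoff p ur σbar tauStar))) :
    AmbObedient φr p ur (fun b : Bool => if b then σbar else σlo)
        (fun b : Bool => if b then μbar else 1 - μbar) ∧
    (φr (expPayoff p ur σstar tauStar) <
        μbar * φr (expPayoff p ur σbar tauStar) + (1 - μbar) * φr (expPayoff p ur σlo tauStar)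
      ↔ lam < μbar) ∧
    (φs (expPayoff p us σstar tauStar) <
        μbar * φs (expPayoff p us σbar tauStar) + (1 - μbar) * φs (expPayoff p us σlo tauStar)
      ↔ probPremium p us φs σbar σlo lam < μbar - lam) ∧
    (∀ φ : ℝ → ℝ, SmoothIndex φ →
      probPremium p us φs σbar σlo lam ≤ probPremium p us (φ ∘ φs) σbar σlo lam) ∧
    (∀ φ : ℝ → ℝ, SmoothIndex φ →
      μbar ≤ lam * deriv (φ ∘ φr) (expPayoff p ur σlo tauStar) /
        (lam * deriv (φ ∘ φr) (expPayoff p ur σlo tauStar) +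
          (1 - lam) * deriv (φ ∘ φr) (expPayoff p ur σbar tauStar))) :=
  binary_improvement_general p us ur φs φr hφs hφr σstar σbar σlo lam hobed hsplit hs μbar hμbar
end

section
/- Spanning condition for existence of a Pareto-ranked splitting: Let σ* be any experiment and for each ω ∈ Ω fix an action a_ω in the support of σ*(·|ω). If the set of vectors { (p(ω)(u_s(a,ω) − u_s(a_ω,ω)), p(ω)(u_r(a,ω) − u_r(a_ω,ω))) : ω ∈ Ω, a ∈ support of σ*(·|ω) } spans ℝ², then there exists a Pareto-ranked splitting (σ̄, σ̲, λ) of σ*. -/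
open Finset

/-!
Write `(1, 1)` as a combination `∑ c(ω,a) g(ω,a)` of the spanning vectors. Shifting, in each
state `ω`, probability `c(ω,a)` from `a_ω` onto `a` is a direction `D` with zero row sums that
vanishes off the support of `σ*`, and along it both players' obedient payoffs grow at rate one.
So `σ* ± εD` are experiments for small `ε > 0`, `σ*` is their even mixture, and `σ* + εD` is
better for both players.
-/

open Filter Topology

lemma expPayoff_tauStar {Ω A : Type*} [Fintype Ω] [Fintype A] [DecidableEq A]
    (p : Ω → ℝ) (u : A → Ω → ℝ) (σ : Ω → A → ℝ) :
    expPayoff p u σ tauStar = ∑ ω, ∑ a, p ω * σ ω a * u a ω := by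
  simp [expPayoff, tauStar]

lemma expPayoff_add_mul_tauStar {Ω A : Type*} [Fintype Ω] [Fintype A] [DecidableEq A]
    (p : Ω → ℝ) (u : A → Ω → ℝ) (σ D : Ω → A → ℝ) (t : ℝ) :
    expPayoff p u (fun ω a => σ ω a + t * D ω a) tauStar =
      expPayoff p u σ tauStar + t * expPayoff p u D tauStar := by
  simp only [expPayoff_tauStar, mul_sum, ← sum_add_distrib]
  exact sum_congr rfl fun ω _ => sum_congr rfl fun a _ => by ring

lemma eventually_isKernel_add_mul {X Y : Type*} [Finite X] [Fintype Y] {σ D : X → Y → ℝ}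
    (hσ : IsKernel σ) (hD_sum : ∀ x, ∑ y, D x y = 0) (hD_supp : ∀ x y, σ x y = 0 → D x y = 0) :
    ∀ᶠ t in 𝓝 (0 : ℝ), IsKernel fun x y => σ x y + t * D x y := by
  have hnonneg : ∀ x y, ∀ᶠ t in 𝓝 (0 : ℝ), 0 ≤ σ x y + t * D x y := by
    intro x y
    rcases (hσ.1 x y).eq_or_lt with hzero | hpos
    · exact Eventually.of_forall fun t => by simp [← hzero, hD_supp x y hzero.symm]
    · have hlim : Tendsto (fun t : ℝ => σ x y + t * D x y) (𝓝 0) (𝓝 (σ x y)) := by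
        simpa using (tendsto_const_nhds (x := σ x y)).add
          ((tendsto_id (x := 𝓝 (0 : ℝ))).mul_const (D x y))
      exact (hlim.eventually (lt_mem_nhds hpos)).mono fun _ => le_of_lt
  filter_upwards [eventually_all.2 fun x => eventually_all.2 (hnonneg x)] with t ht
  exact ⟨ht, fun x => by simp [sum_add_distrib, ← mul_sum, hσ.2, hD_sum]⟩

theorem exists_paretoRankedSplitting_of_direction {Ω A : Type*} [Fintype Ω] [Fintype A]
    [DecidableEq A] {p : Ω → ℝ} {us ur : A → Ω → ℝ} {σ D : Ω → A → ℝ} (hσ : IsKernel σ)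
    (hD_sum : ∀ ω, ∑ a, D ω a = 0) (hD_supp : ∀ ω a, σ ω a = 0 → D ω a = 0)
    (hus : 0 < expPayoff p us D tauStar) (hur : 0 < expPayoff p ur D tauStar) :
    ∃ (σbar σlo : Ω → A → ℝ) (lam : ℝ), ParetoRankedSplitting p us ur σbar σlo lam σ := by
  have hplus := eventually_isKernel_add_mul hσ hD_sum hD_supp
  have hminus : ∀ᶠ t in 𝓝 (0 : ℝ), IsKernel fun ω a => σ ω a + -t * D ω a :=
    (continuous_neg.tendsto' (0 : ℝ) 0 neg_zero).eventually hplus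
  obtain ⟨ε, ⟨hbar, hlo⟩, hε⟩ :=
    (((hplus.and hminus).filter_mono nhdsWithin_le_nhds).and
      (self_mem_nhdsWithin : Set.Ioi (0 : ℝ) ∈ 𝓝[>] 0)).exists
  refine ⟨_, _, 1 / 2, hbar, hlo, by norm_num, ?_, Or.inl ?_⟩
  · funext ω a
    simp only [mixExp]
    ring
  · simp only [expPayoff_add_mul_tauStar]
    constructor <;> nlinarith [show (0 : ℝ) < ε from hε]

lemma exists_sum_smul_eq_of_mem_span_image {ι R M : Type*} [Fintype ι] [Semiring R]
    [AddCommMonoid M] [Module R M] {f : ι → M} {s : Set ι} {x : M}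
    (hx : x ∈ Submodule.span R (f '' s)) : ∃ c : ι → R, (∀ i ∉ s, c i = 0) ∧ ∑ i, c i • f i = x := by
  obtain ⟨c, hc_supp, rfl⟩ := (Finsupp.mem_span_image_iff_linearCombination R).1 hx
  refine ⟨c, fun i hi => Finsupp.notMem_support_iff.1 fun hmem => hi (hc_supp hmem), ?_⟩
  rw [Finsupp.linearCombination_apply, Finsupp.sum_fintype _ _ (by simp)]

section Transfer

variable {Ω A : Type*} [Fintype A] [DecidableEq A]

def transferFromBase (base : Ω → A) (c : Ω → A → ℝ) : Ω → A → ℝ :=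
  fun ω a => c ω a - if a = base ω then ∑ b, c ω b else 0

lemma sum_transferFromBase (base : Ω → A) (c : Ω → A → ℝ) (ω : Ω) :
    ∑ a, transferFromBase base c ω a = 0 := by
  simp [transferFromBase, sum_sub_distrib]

lemma transferFromBase_eq_zero {base : Ω → A} {c : Ω → A → ℝ} {ω : Ω} {a : A}
    (hc : c ω a = 0) (ha : a ≠ base ω) : transferFromBase base c ω a = 0 := by
  simp [transferFromBase, hc, ha]

lemma expPayoff_transferFromBase_tauStar [Fintype Ω] (p : Ω → ℝ) (u : A → Ω → ℝ)
    (base : Ω → A) (c : Ω → A → ℝ) :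
    expPayoff p u (transferFromBase base c) tauStar =
      ∑ ω, ∑ a, c ω a * (p ω * (u a ω - u (base ω) ω)) := by
  simp only [expPayoff_tauStar, transferFromBase]
  refine sum_congr rfl fun ω _ => ?_
  simp only [mul_sub, sub_mul, sum_sub_distrib, mul_ite, ite_mul, mul_zero, zero_mul,
    sum_ite_eq', mem_univ, if_true, sum_mul, mul_sum]
  congr 1 <;> exact sum_congr rfl fun a _ => by ring

end Transfer

theorem spanning_implies_pareto_ranked_splitting_general
    {Ω A : Type*} [Fintype Ω] [Fintype A] [DecidableEq A]
    (p : Ω → ℝ) (us ur : A → Ω → ℝ)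
    (σstar : Ω → A → ℝ) (hσstar : IsKernel σstar)
    (aω : Ω → A) (haω : ∀ ω, 0 < σstar ω (aω ω))
    (hspan : Submodule.span ℝ
      {v : ℝ × ℝ | ∃ ω a, 0 < σstar ω a ∧
        v = (p ω * (us a ω - us (aω ω) ω), p ω * (ur a ω - ur (aω ω) ω))} = ⊤) :
    ∃ (σbar σlo : Ω → A → ℝ) (lam : ℝ),
      ParetoRankedSplitting p us ur σbar σlo lam σstar := by
  set gain : Ω × A → ℝ × ℝ := fun q =>
    (p q.1 * (us q.2 q.1 - us (aω q.1) q.1), p q.1 * (ur q.2 q.1 - ur (aω q.1) q.1))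
  have hset : {v : ℝ × ℝ | ∃ ω a, 0 < σstar ω a ∧
      v = (p ω * (us a ω - us (aω ω) ω), p ω * (ur a ω - ur (aω ω) ω))} =
      gain '' {q | 0 < σstar q.1 q.2} := by
    ext v
    simp [gain, eq_comm]
  have hone : ((1 : ℝ), (1 : ℝ)) ∈ Submodule.span ℝ (gain '' {q | 0 < σstar q.1 q.2}) := by
    simp [← hset, hspan]
  obtain ⟨c, hc_supp, hc⟩ := exists_sum_smul_eq_of_mem_span_image hone
  have hD_supp : ∀ ω a, σstar ω a = 0 → transferFromBase aω (fun ω a => c (ω, a)) ω a = 0 := by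
    intro ω a hzero
    refine transferFromBase_eq_zero (hc_supp (ω, a) hzero.not_gt) ?_
    rintro rfl
    exact (haω ω).ne' hzero
  refine exists_paretoRankedSplitting_of_direction hσstar (sum_transferFromBase _ _) hD_supp ?_ ?_
  · have hfst := congrArg Prod.fst hc
    simp only [Prod.fst_sum, Prod.smul_fst, smul_eq_mul, gain] at hfst
    rw [expPayoff_transferFromBase_tauStar, ← Fintype.sum_prod_type', hfst]
    exact one_pos
  · have hsnd := congrArg Prod.snd hc
    simp only [Prod.snd_sum, Prod.smul_snd, smul_eq_mul, gain] at hsnd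
    rw [expPayoff_transferFromBase_tauStar, ← Fintype.sum_prod_type', hsnd]
    exact one_pos

/-- Proposition 3, spanning condition: fix for each `ω` an action `aω ω`
in the support of `σstar(·|ω)`.  If the vectors
`(p(ω)(u_s(a,ω) − u_s(aω ω,ω)), p(ω)(u_r(a,ω) − u_r(aω ω,ω)))`, over `ω ∈ Ω` and `a` in
the support of `σstar(·|ω)`, span `ℝ²`, then `σstar` admits a Pareto-ranked splitting. -/
theorem spanning_implies_pareto_ranked_splitting
    {Ω A : Type*} [Fintype Ω] [Fintype A] [DecidableEq A]
    (p : Ω → ℝ) (hp : IsProb p) (us ur : A → Ω → ℝ)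
    (σstar : Ω → A → ℝ) (hσstar : IsKernel σstar)
    (aω : Ω → A) (haω : ∀ ω, 0 < σstar ω (aω ω))
    (hspan : Submodule.span ℝ
      {v : ℝ × ℝ | ∃ ω a, 0 < σstar ω a ∧
        v = (p ω * (us a ω - us (aω ω) ω), p ω * (ur a ω - ur (aω ω) ω))} = ⊤) :
    ∃ (σbar σlo : Ω → A → ℝ) (lam : ℝ),
      ParetoRankedSplitting p us ur σbar σlo lam σstar :=
  spanning_implies_pareto_ranked_splitting_general p us ur σstar hσstar aω haω hspan
end

section
/- Robustness to ambiguity aversion: Suppose there exist a pair of experiments σ = (σ̄, σ̲) and a non-degenerate μ ∈ Δ({1,2}) such that the binary ambiguous experiment (σ, μ) is obedient and U_s(σ, μ, τ*) > u_s^BP. Then: (i) (σ, μ) still satisfies Ũ_s(σ, μ, τ*) > u_s^BP for any sender with φ̃_s less concave than φ_s (i.e., φ_s = φ∘φ̃_s for some strictly increasing, concave, differentiable φ); (ii) for any receiver with φ̃_r = φ∘φ_r more concave than φ_r (φ strictly increasing, concave, differentiable), there exists μ̃ ∈ Δ({1,2}) such that (σ, μ̃) is obedient for the φ̃_r-receiver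 and gives the sender a payoff above u_s^BP; and (iii) if additionally σ̲ is obedient as a single experiment, then μ̃ in (ii) can be taken equal to μ. -/
open Finset

/-!
By the first-order condition of ambiguous obedience, reweighting the splitting `(σbar, σlo)` by
`μ_θ φr'(u_r(σ_θ, τ*))` averages it to an obedient Bayesian experiment, so by Jensen the
reweighted sender gain over `usBP` is nonpositive, while the `μ`-weighted gain is positive.
Comparing the two weightings shows that sender and receiver strictly rank `σbar` and `σlo` the
same way. A more ambiguity-averse receiver `φ ∘ φr` stays obedient under the weights
`μ_θ / φ'(φr(u_r(σ_θ, τ*)))`, which shift mass towards the receiver's preferred experiment, hence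
towards the sender's, so the sender's gain survives. If `σlo` is obedient, its sender payoff is at
most `usBP`, so both players prefer `σbar`, and then the concave `φ` preserves obedience under the
original weights. Part (i) is Jensen's inequality for `φ`.
-/

namespace SmoothIndex

variable {φ : ℝ → ℝ}

theorem sub_le_deriv_mul_sub (hφ : SmoothIndex φ) (a b : ℝ) : φ b - φ a ≤ deriv φ a * (b - a) := by
  rcases lt_trichotomy a b with hab | rfl | hba
  · have h := hφ.2.1.slope_le_deriv (Set.mem_univ a) (Set.mem_univ b) hab (hφ.2.2 a)
    rw [slope_def_field, div_le_iff₀ (sub_pos.2 hab)] at h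
    linarith
  · simp
  · have h := hφ.2.1.deriv_le_slope (Set.mem_univ b) (Set.mem_univ a) hba (hφ.2.2 a)
    rw [slope_def_field, le_div_iff₀ (sub_pos.2 hba)] at h
    linarith

theorem deriv_pos_s13 (hφ : SmoothIndex φ) (x : ℝ) : 0 < deriv φ x := by
  have h := hφ.sub_le_deriv_mul_sub x (x + 1)
  have := hφ.1 (lt_add_one x)
  rw [add_sub_cancel_left, mul_one] at h
  linarith

theorem antitone_deriv (hφ : SmoothIndex φ) : Antitone (deriv φ) := fun _ _ hab =>
  hφ.2.1.antitoneOn_deriv (fun x _ => hφ.2.2 x) (Set.mem_univ _) (Set.mem_univ _) hab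

end SmoothIndex

theorem Antitone.sub_mul_sub_nonneg {f g : ℝ → ℝ} (hf : Antitone f) (hg : Antitone g) (a b : ℝ) :
    0 ≤ (f a - f b) * (g a - g b) := by
  rcases le_total a b with hab | hba
  · exact mul_nonneg (sub_nonneg.2 (hf hab)) (sub_nonneg.2 (hg hab))
  · exact mul_nonneg_of_nonpos_of_nonpos (sub_nonpos.2 (hf hba)) (sub_nonpos.2 (hg hba))

theorem lt_of_mul_add_mul_nonpos {s₁ s₂ d₁ d₂ : ℝ} (hs : 0 < s₁ + s₂)
    (h : d₁ * s₁ + d₂ * s₂ ≤ 0) (hd₁ : 0 < d₁) (hs₂ : s₂ ≤ 0) : d₁ < d₂ := by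
  by_contra! hd
  nlinarith [mul_pos hd₁ hs, mul_le_mul_of_nonpos_right hd hs₂]

theorem div_add_div_pos_of_mul_add_mul_nonpos {s₁ s₂ d₁ d₂ e₁ e₂ : ℝ} (hs : 0 < s₁ + s₂)
    (h : d₁ * s₁ + d₂ * s₂ ≤ 0) (hd₁ : 0 < d₁) (hd₂ : 0 < d₂) (he₁ : 0 < e₁) (he₂ : 0 < e₂)
    (hde : 0 ≤ (d₁ - d₂) * (e₁ - e₂)) : 0 < s₁ / e₁ + s₂ / e₂ := by
  rw [div_add_div _ _ he₁.ne' he₂.ne']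
  refine div_pos ?_ (mul_pos he₁ he₂)
  rcases lt_trichotomy d₁ d₂ with hlt | rfl | hgt
  · have hs₁ : 0 < s₁ := by nlinarith [mul_pos hd₂ hs]
    have he : e₁ ≤ e₂ := by nlinarith
    nlinarith [mul_le_mul_of_nonneg_left he hs₁.le, mul_pos he₁ hs]
  · nlinarith [mul_pos hd₁ hs]
  · have hs₂ : 0 < s₂ := by nlinarith [mul_pos hd₁ hs]
    have he : e₂ ≤ e₁ := by nlinarith
    nlinarith [mul_le_mul_of_nonneg_left he hs₂.le, mul_pos he₂ hs]

theorem lt_mul_add_mul_of_eq_comp {φ φs φs' : ℝ → ℝ} (hmono : StrictMono φ)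
    (hconc : ConcaveOn ℝ Set.univ φ) (hcomp : ∀ x, φs x = φ (φs' x)) {μ₁ μ₂ v a b : ℝ}
    (hμ₁ : 0 ≤ μ₁) (hμ₂ : 0 ≤ μ₂) (hμ : μ₁ + μ₂ = 1) (h : φs v < μ₁ * φs a + μ₂ * φs b) :
    φs' v < μ₁ * φs' a + μ₂ * φs' b := by
  refine hmono.lt_iff_lt.1 ?_
  calc φ (φs' v) = φs v := (hcomp v).symm
    _ < μ₁ • φ (φs' a) + μ₂ • φ (φs' b) := by simpa only [hcomp, smul_eq_mul] using h
    _ ≤ φ (μ₁ • φs' a + μ₂ • φs' b) := hconc.2 trivial trivial hμ₁ hμ₂ hμ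

/-- Since `c ≤ d ≤ a`, the loss `m₂ (d - c)` is valued at a slope `φ'(d) ≥ φ'(a)`, which outweighs
the gain `m₁ (b - a)`, valued at most at `φ'(a)`. -/
theorem SmoothIndex.mul_add_mul_le {φ : ℝ → ℝ} (hφ : SmoothIndex φ) {m₁ m₂ a b c d : ℝ}
    (hm₁ : 0 ≤ m₁) (hm₂ : 0 ≤ m₂) (hda : d ≤ a) (hcd : c ≤ d)
    (h : m₁ * b + m₂ * c ≤ m₁ * a + m₂ * d) :
    m₁ * φ b + m₂ * φ c ≤ m₁ * φ a + m₂ * φ d := by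
  rcases le_or_gt b a with hba | hab
  · exact add_le_add (mul_le_mul_of_nonneg_left (hφ.1.monotone hba) hm₁)
      (mul_le_mul_of_nonneg_left (hφ.1.monotone hcd) hm₂)
  suffices m₁ * (φ b - φ a) ≤ m₂ * (φ d - φ c) by linarith
  have hloss : 0 ≤ m₂ * (d - c) := mul_nonneg hm₂ (sub_nonneg.2 hcd)
  have hd : deriv φ d * (d - c) ≤ φ d - φ c := by
    nlinarith [hφ.sub_le_deriv_mul_sub d c]
  calc m₁ * (φ b - φ a) ≤ m₁ * (deriv φ a * (b - a)) :=
        mul_le_mul_of_nonneg_left (hφ.sub_le_deriv_mul_sub a b) hm₁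
    _ = deriv φ a * (m₁ * (b - a)) := by ring
    _ ≤ deriv φ a * (m₂ * (d - c)) :=
        mul_le_mul_of_nonneg_left (by linarith) (hφ.deriv_pos_s13 a).le
    _ ≤ deriv φ d * (m₂ * (d - c)) := mul_le_mul_of_nonneg_right (hφ.antitone_deriv hda) hloss
    _ = m₂ * (deriv φ d * (d - c)) := by ring
    _ ≤ m₂ * (φ d - φ c) := mul_le_mul_of_nonneg_left hd hm₂

theorem isKernel_tauStar {A : Type*} [Fintype A] [DecidableEq A] : IsKernel (tauStar (A := A)) :=
  ⟨fun m a => by unfold tauStar; split_ifs <;> norm_num, fun m => by simp [tauStar]⟩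

theorem IsKernel.mix {X Y : Type*} [Fintype Y] {k₁ k₂ : X → Y → ℝ} (h₁ : IsKernel k₁)
    (h₂ : IsKernel k₂) {t : ℝ} (ht₀ : 0 ≤ t) (ht₁ : t ≤ 1) : IsKernel (mixExp t k₁ k₂) := by
  refine ⟨fun x y => ?_, fun x => ?_⟩
  · have := h₁.1 x y
    have := h₂.1 x y
    unfold mixExp
    nlinarith
  · simp only [mixExp, sum_add_distrib, ← mul_sum, h₁.2, h₂.2]
    ring

section Payoff

variable {Ω A : Type*} [Fintype Ω] [Fintype A] (p : Ω → ℝ) (u : A → Ω → ℝ)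

theorem expPayoff_mixExp_left (t : ℝ) (σ₁ σ₂ : Ω → A → ℝ) (τ : A → A → ℝ) :
    expPayoff p u (mixExp t σ₁ σ₂) τ = t * expPayoff p u σ₁ τ + (1 - t) * expPayoff p u σ₂ τ := by
  simp only [expPayoff, mixExp, mul_sum, ← sum_add_distrib]
  exact sum_congr rfl fun _ _ => sum_congr rfl fun _ _ => sum_congr rfl fun _ _ => by ring

theorem expPayoff_mixExp_right (t : ℝ) (σ : Ω → A → ℝ) (τ₁ τ₂ : A → A → ℝ) :
    expPayoff p u σ (mixExp t τ₁ τ₂) = t * expPayoff p u σ τ₁ + (1 - t) * expPayoff p u σ τ₂ := by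
  simp only [expPayoff, mixExp, mul_sum, ← sum_add_distrib]
  exact sum_congr rfl fun _ _ => sum_congr rfl fun _ _ => sum_congr rfl fun _ _ => by ring

end Payoff

theorem isProb_div_sum {Θ : Type*} [Fintype Θ] {w : Θ → ℝ} (hw : ∀ θ, 0 ≤ w θ)
    (hpos : 0 < ∑ θ, w θ) : IsProb fun θ => w θ / ∑ θ', w θ' :=
  ⟨fun θ => div_nonneg (hw θ) hpos.le, by rw [← sum_div, div_self hpos.ne']⟩

section Obedience

variable {Ω A Θ : Type*} [Fintype Ω] [Fintype A] [DecidableEq A] [Fintype Θ]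
  {p : Ω → ℝ} {ur : A → Ω → ℝ} {σ : Θ → Ω → A → ℝ} {φr : ℝ → ℝ} {μ : Θ → ℝ}

/-- First-order condition of ambiguous obedience, at `τ*` in the direction of `τ`. -/
theorem AmbObedient.sum_mul_deriv_mul_sub_nonpos (hφr : Differentiable ℝ φr)
    (h : AmbObedient φr p ur σ μ) {τ : A → A → ℝ} (hτ : IsKernel τ) :
    ∑ θ, μ θ * deriv φr (expPayoff p ur (σ θ) tauStar) *
      (expPayoff p ur (σ θ) τ - expPayoff p ur (σ θ) tauStar) ≤ 0 := by
  set x := fun θ => expPayoff p ur (σ θ) tauStar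
  set y := fun θ => expPayoff p ur (σ θ) τ
  set g : ℝ → ℝ := fun l => ∑ θ, μ θ * φr (x θ + l * (y θ - x θ))
  have hmax : IsLocalMaxOn g (Set.Icc 0 1) 0 := by
    refine Filter.eventually_of_mem self_mem_nhdsWithin fun l hl => ?_
    have hmix : ∀ θ, expPayoff p ur (σ θ) (mixExp l τ tauStar) = x θ + l * (y θ - x θ) :=
      fun θ => by rw [expPayoff_mixExp_right]; ring
    simpa only [g, hmix, zero_mul, add_zero] using
      h (mixExp l τ tauStar) (hτ.mix isKernel_tauStar hl.1 hl.2)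
  have hg : HasDerivAt g (∑ θ, μ θ * deriv φr (x θ) * (y θ - x θ)) 0 := by
    refine HasDerivAt.fun_sum fun θ _ => ?_
    have hlin : HasDerivAt (fun l : ℝ => x θ + l * (y θ - x θ)) (y θ - x θ) 0 := by
      simpa using ((hasDerivAt_id (0 : ℝ)).mul_const (y θ - x θ)).const_add (x θ)
    rw [mul_assoc]
    refine HasDerivAt.const_mul _ ?_
    exact (hφr (x θ)).hasDerivAt.comp_of_eq 0 hlin (by ring)
  have hseg : (1 : ℝ) ∈ posTangentConeAt (Set.Icc 0 1) 0 :=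
    mem_posTangentConeAt_of_segment_subset (by simp [segment_eq_Icc])
  simpa using hmax.hasFDerivWithinAt_nonpos hg.hasDerivWithinAt hseg

theorem AmbObedient.div_const (h : AmbObedient φr p ur σ μ) {c : ℝ} (hc : 0 ≤ c) :
    AmbObedient φr p ur σ fun θ => μ θ / c := fun τ hτ => by
  simp only [div_mul_eq_mul_div, ← sum_div]
  exact div_le_div_of_nonneg_right (h τ hτ) hc

/-- Dividing each weight by `φ'` at the obedient payoff exactly offsets the extra curvature of
`φ` to first order; concavity of `φ` turns this into a global bound. -/
theorem AmbObedient.comp_div_deriv {φ : ℝ → ℝ} (hφ : SmoothIndex φ) (hμ : ∀ θ, 0 ≤ μ θ)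
    (h : AmbObedient φr p ur σ μ) :
    AmbObedient (φ ∘ φr) p ur σ fun θ => μ θ / deriv φ (φr (expPayoff p ur (σ θ) tauStar)) := by
  intro τ hτ
  rw [← sub_nonpos, ← sum_sub_distrib]
  calc _ ≤ ∑ θ, (μ θ * φr (expPayoff p ur (σ θ) τ) - μ θ * φr (expPayoff p ur (σ θ) tauStar)) := by
        refine sum_le_sum fun θ _ => ?_
        set a := φr (expPayoff p ur (σ θ) tauStar)
        set b := φr (expPayoff p ur (σ θ) τ)
        have hd := hφ.deriv_pos_s13 a
        calc μ θ / deriv φ a * (φ ∘ φr) (expPayoff p ur (σ θ) τ) - μ θ / deriv φ a * φ a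
            = μ θ / deriv φ a * (φ b - φ a) := by simp only [Function.comp_apply, b]; ring
          _ ≤ μ θ / deriv φ a * (deriv φ a * (b - a)) :=
            mul_le_mul_of_nonneg_left (hφ.sub_le_deriv_mul_sub a b) (div_nonneg (hμ θ) hd.le)
          _ = μ θ * b - μ θ * a := by field_simp
    _ ≤ 0 := by rw [sum_sub_distrib, sub_nonpos]; exact h τ hτ

end Obedience

def obedientPayoffs {Ω A : Type*} [Fintype Ω] [Fintype A] [DecidableEq A]
    (p : Ω → ℝ) (us ur : A → Ω → ℝ) : Set ℝ :=
  {x | ∃ σ0 : Ω → A → ℝ, IsKernel σ0 ∧ Obedient p ur σ0 ∧ x = expPayoff p us σ0 tauStar}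

section Robustness

variable {Ω A : Type*} [Fintype Ω] [Fintype A] [DecidableEq A] {p : Ω → ℝ} {us ur : A → Ω → ℝ}
  {φs φr : ℝ → ℝ} {usBP : ℝ} {σbar σlo : Ω → A → ℝ} {μ : Bool → ℝ}

theorem obedient_mixExp_of_mul_add_mul_nonpos {σ₁ σ₂ : Ω → A → ℝ} {c₁ c₂ : ℝ}
    (hc : 0 < c₁ + c₂)
    (h : ∀ τ, IsKernel τ → c₁ * (expPayoff p ur σ₁ τ - expPayoff p ur σ₁ tauStar) +
      c₂ * (expPayoff p ur σ₂ τ - expPayoff p ur σ₂ tauStar) ≤ 0) :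
    Obedient p ur (mixExp (c₁ / (c₁ + c₂)) σ₁ σ₂) := by
  intro τ hτ
  rw [expPayoff_mixExp_left, expPayoff_mixExp_left, ← sub_nonpos]
  calc _ = (c₁ * (expPayoff p ur σ₁ τ - expPayoff p ur σ₁ tauStar) +
        c₂ * (expPayoff p ur σ₂ τ - expPayoff p ur σ₂ tauStar)) / (c₁ + c₂) := by
        field_simp; ring
    _ ≤ 0 := div_nonpos_of_nonpos_of_nonneg (h τ hτ) hc.le

theorem deriv_mul_gain_add_deriv_mul_gain_nonpos (hφs : SmoothIndex φs) (hφr : SmoothIndex φr)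
    (husBP : usBP ∈ upperBounds (obedientPayoffs p us ur))
    (hσbar : IsKernel σbar) (hσlo : IsKernel σlo) (hμ : ∀ b, 0 < μ b)
    (hobed : AmbObedient φr p ur (fun b : Bool => if b then σbar else σlo) μ) :
    deriv φr (expPayoff p ur σbar tauStar) *
        (μ true * (φs (expPayoff p us σbar tauStar) - φs usBP)) +
      deriv φr (expPayoff p ur σlo tauStar) *
        (μ false * (φs (expPayoff p us σlo tauStar) - φs usBP)) ≤ 0 := by
  set c₁ := μ true * deriv φr (expPayoff p ur σbar tauStar) with hc₁_def
  set c₂ := μ false * deriv φr (expPayoff p ur σlo tauStar) with hc₂_def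
  have hc₁ : 0 < c₁ := mul_pos (hμ true) (hφr.deriv_pos_s13 _)
  have hc₂ : 0 < c₂ := mul_pos (hμ false) (hφr.deriv_pos_s13 _)
  set ρ := c₁ / (c₁ + c₂)
  have hρc : (c₁ + c₂) * ρ = c₁ := mul_div_cancel₀ _ (add_pos hc₁ hc₂).ne'
  have hρ₀ : 0 ≤ ρ := by positivity
  have hρ₁ : ρ ≤ 1 := div_le_one_of_le₀ (by linarith) (by positivity)
  have hfoc : ∀ τ, IsKernel τ → c₁ * (expPayoff p ur σbar τ - expPayoff p ur σbar tauStar) +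
      c₂ * (expPayoff p ur σlo τ - expPayoff p ur σlo tauStar) ≤ 0 := fun τ hτ => by
    simpa [Fintype.sum_bool] using hobed.sum_mul_deriv_mul_sub_nonpos hφr.2.2 hτ
  have hmix : ρ * expPayoff p us σbar tauStar + (1 - ρ) * expPayoff p us σlo tauStar ≤ usBP := by
    rw [← expPayoff_mixExp_left]
    exact husBP ⟨_, hσbar.mix hσlo hρ₀ hρ₁,
      obedient_mixExp_of_mul_add_mul_nonpos (add_pos hc₁ hc₂) hfoc, rfl⟩
  have hjensen : ρ * φs (expPayoff p us σbar tauStar) +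
      (1 - ρ) * φs (expPayoff p us σlo tauStar) ≤ φs usBP :=
    (hφs.2.1.2 trivial trivial hρ₀ (sub_nonneg.2 hρ₁) (add_sub_cancel ρ 1)).trans
      (hφs.1.monotone hmix)
  set a := φs (expPayoff p us σbar tauStar)
  set b := φs (expPayoff p us σlo tauStar)
  calc _ = (c₁ + c₂) * (ρ * a + (1 - ρ) * b - φs usBP) := by
        linear_combination -(a - φs usBP) * hc₁_def - (b - φs usBP) * hc₂_def - (a - b) * hρc
    _ ≤ 0 := mul_nonpos_of_nonneg_of_nonpos (by positivity) (by linarith)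

theorem exists_isProb_ambObedient_comp_and_gain (hφs : SmoothIndex φs) (hφr : SmoothIndex φr)
    (husBP : usBP ∈ upperBounds (obedientPayoffs p us ur))
    (hσbar : IsKernel σbar) (hσlo : IsKernel σlo) (hμ : ∀ b, 0 < μ b)
    (hobed : AmbObedient φr p ur (fun b : Bool => if b then σbar else σlo) μ)
    (hgain : 0 < μ true * (φs (expPayoff p us σbar tauStar) - φs usBP) +
      μ false * (φs (expPayoff p us σlo tauStar) - φs usBP))
    {φ : ℝ → ℝ} (hφ : SmoothIndex φ) :
    ∃ μ' : Bool → ℝ, IsProb μ' ∧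
      AmbObedient (φ ∘ φr) p ur (fun b : Bool => if b then σbar else σlo) μ' ∧
      φs usBP < μ' true * φs (expPayoff p us σbar tauStar) +
        μ' false * φs (expPayoff p us σlo tauStar) := by
  set w : Bool → ℝ := fun b =>
    μ b / deriv φ (φr (expPayoff p ur (if b then σbar else σlo) tauStar))
  have hw : ∀ b, 0 < w b := fun b => div_pos (hμ b) (hφ.deriv_pos_s13 _)
  have hW : 0 < ∑ b, w b := sum_pos (fun b _ => hw b) univ_nonempty
  refine ⟨fun b => w b / ∑ b', w b', isProb_div_sum (fun b => (hw b).le) hW,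
    (hobed.comp_div_deriv hφ fun b => (hμ b).le).div_const hW.le, ?_⟩
  have hcomonotone := hφr.antitone_deriv.sub_mul_sub_nonneg
    (hφ.antitone_deriv.comp_monotone hφr.1.monotone)
    (expPayoff p ur σbar tauStar) (expPayoff p ur σlo tauStar)
  have hpos := div_add_div_pos_of_mul_add_mul_nonpos hgain
    (deriv_mul_gain_add_deriv_mul_gain_nonpos hφs hφr husBP hσbar hσlo hμ hobed)
    (hφr.deriv_pos_s13 _) (hφr.deriv_pos_s13 _) (hφ.deriv_pos_s13 _) (hφ.deriv_pos_s13 _) hcomonotone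
  have hgain' : 0 < w true * (φs (expPayoff p us σbar tauStar) - φs usBP) +
      w false * (φs (expPayoff p us σlo tauStar) - φs usBP) := by
    simpa only [w, if_true, Bool.false_eq_true, if_false, div_mul_eq_mul_div] using hpos
  clear_value w
  simp only [Fintype.sum_bool]
  rw [div_mul_eq_mul_div, div_mul_eq_mul_div, ← add_div,
    lt_div_iff₀ (add_pos (hw true) (hw false))]
  linear_combination hgain'

theorem ambObedient_comp_of_obedient (hφs : SmoothIndex φs) (hφr : SmoothIndex φr)
    (husBP : usBP ∈ upperBounds (obedientPayoffs p us ur))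
    (hσbar : IsKernel σbar) (hσlo : IsKernel σlo) (hμ : ∀ b, 0 < μ b)
    (hobed : AmbObedient φr p ur (fun b : Bool => if b then σbar else σlo) μ)
    (hgain : 0 < μ true * (φs (expPayoff p us σbar tauStar) - φs usBP) +
      μ false * (φs (expPayoff p us σlo tauStar) - φs usBP))
    {φ : ℝ → ℝ} (hφ : SmoothIndex φ) (hlo : Obedient p ur σlo) :
    AmbObedient (φ ∘ φr) p ur (fun b : Bool => if b then σbar else σlo) μ := by
  have hulo : expPayoff p us σlo tauStar ≤ usBP := husBP ⟨σlo, hσlo, hlo, rfl⟩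
  have hderiv := lt_of_mul_add_mul_nonpos hgain
    (deriv_mul_gain_add_deriv_mul_gain_nonpos hφs hφr husBP hσbar hσlo hμ hobed)
    (hφr.deriv_pos_s13 _)
    (mul_nonpos_of_nonneg_of_nonpos (hμ false).le (sub_nonpos.2 (hφs.1.monotone hulo)))
  have hrank := hφr.antitone_deriv.reflect_lt hderiv
  intro τ hτ
  have hτ' := hobed τ hτ
  simp only [Fintype.sum_bool, Function.comp_apply, if_true, Bool.false_eq_true, if_false]
    at hτ' ⊢
  exact hφ.mul_add_mul_le (hμ true).le (hμ false).le (hφr.1.monotone hrank.le)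
    (hφr.1.monotone (hlo τ hτ)) hτ'

end Robustness

theorem robustness_to_ambiguity_aversion_general
    {Ω A : Type*} [Fintype Ω] [Fintype A] [DecidableEq A]
    (p : Ω → ℝ) (us ur : A → Ω → ℝ)
    (φs φr : ℝ → ℝ) (hφs : SmoothIndex φs) (hφr : SmoothIndex φr)
    (usBP : ℝ)
    (husBP : IsGreatest {x : ℝ | ∃ σ0 : Ω → A → ℝ,
      IsKernel σ0 ∧ Obedient p ur σ0 ∧ x = expPayoff p us σ0 tauStar} usBP)
    (σbar σlo : Ω → A → ℝ) (hσbar : IsKernel σbar) (hσlo : IsKernel σlo)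
    (μ : Bool → ℝ) (hμ : IsProb μ) (hnd : ∀ b, 0 < μ b)
    (hobed : AmbObedient φr p ur (fun b : Bool => if b then σbar else σlo) μ)
    (hben : φs usBP < μ true * φs (expPayoff p us σbar tauStar) +
      μ false * φs (expPayoff p us σlo tauStar)) :
    (∀ φ φs' : ℝ → ℝ, SmoothIndex φ → SmoothIndex φs' → (∀ x, φs x = φ (φs' x)) →
      φs' usBP < μ true * φs' (expPayoff p us σbar tauStar) +
        μ false * φs' (expPayoff p us σlo tauStar)) ∧
    (∀ φ : ℝ → ℝ, SmoothIndex φ →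
      ∃ μ' : Bool → ℝ, IsProb μ' ∧
        AmbObedient (φ ∘ φr) p ur (fun b : Bool => if b then σbar else σlo) μ' ∧
        φs usBP < μ' true * φs (expPayoff p us σbar tauStar) +
          μ' false * φs (expPayoff p us σlo tauStar)) ∧
    (∀ φ : ℝ → ℝ, SmoothIndex φ → Obedient p ur σlo →
      AmbObedient (φ ∘ φr) p ur (fun b : Bool => if b then σbar else σlo) μ ∧
      φs usBP < μ true * φs (expPayoff p us σbar tauStar) +
        μ false * φs (expPayoff p us σlo tauStar)) := by
  have hsum : μ true + μ false = 1 := by simpa only [Fintype.sum_bool] using hμ.2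
  have hgain : 0 < μ true * (φs (expPayoff p us σbar tauStar) - φs usBP) +
      μ false * (φs (expPayoff p us σlo tauStar) - φs usBP) := by
    linear_combination hben + φs usBP * hsum
  refine ⟨fun φ φs' hφ _ hcomp => ?_, fun φ hφ => ?_, fun φ hφ hlo => ⟨?_, hben⟩⟩
  · exact lt_mul_add_mul_of_eq_comp hφ.1 hφ.2.1 hcomp (hnd true).le (hnd false).le hsum hben
  · exact exists_isProb_ambObedient_comp_and_gain hφs hφr husBP.2 hσbar hσlo hnd hobed hgain hφ
  · exact ambObedient_comp_of_obedient hφs hφr husBP.2 hσbar hσlo hnd hobed hgain hφ hlo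

/-- Theorem 5, robustness: suppose the binary ambiguous experiment
`((σbar, σlo), μ)` (indexed by `Bool`, with `μ true` the weight on `σbar`) is obedient,
`μ` non-degenerate, and it benefits the sender (`U_s > u_s^BP`, stated via the strictly
increasing index).  Then (i) it also benefits every less ambiguity-averse sender `φs'`
(i.e. `φs = φ ∘ φs'`); (ii) for every more ambiguity-averse receiver `φ ∘ φr` there is a
weight `μ'` making `((σbar, σlo), μ')` obedient and beneficial to the sender; and (iii) if
`σlo` is obedient as a single experiment, `μ' = μ` works. -/
theorem robustness_to_ambiguity_aversion
    {Ω A : Type*} [Fintype Ω] [Fintype A] [DecidableEq A]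
    (p : Ω → ℝ) (hp : IsProb p) (us ur : A → Ω → ℝ)
    (φs φr : ℝ → ℝ) (hφs : SmoothIndex φs) (hφr : SmoothIndex φr)
    (usBP : ℝ)
    (husBP : IsGreatest {x : ℝ | ∃ σ0 : Ω → A → ℝ,
      IsKernel σ0 ∧ Obedient p ur σ0 ∧ x = expPayoff p us σ0 tauStar} usBP)
    (σbar σlo : Ω → A → ℝ) (hσbar : IsKernel σbar) (hσlo : IsKernel σlo)
    (μ : Bool → ℝ) (hμ : IsProb μ) (hnd : ∀ b, 0 < μ b)
    (hobed : AmbObedient φr p ur (fun b : Bool => if b then σbar else σlo) μ)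
    (hben : φs usBP < μ true * φs (expPayoff p us σbar tauStar) +
      μ false * φs (expPayoff p us σlo tauStar)) :
    (∀ φ φs' : ℝ → ℝ, SmoothIndex φ → SmoothIndex φs' → (∀ x, φs x = φ (φs' x)) →
      φs' usBP < μ true * φs' (expPayoff p us σbar tauStar) +
        μ false * φs' (expPayoff p us σlo tauStar)) ∧
    (∀ φ : ℝ → ℝ, SmoothIndex φ →
      ∃ μ' : Bool → ℝ, IsProb μ' ∧
        AmbObedient (φ ∘ φr) p ur (fun b : Bool => if b then σbar else σlo) μ' ∧
        φs usBP < μ' true * φs (expPayoff p us σbar tauStar) +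
          μ' false * φs (expPayoff p us σlo tauStar)) ∧
    (∀ φ : ℝ → ℝ, SmoothIndex φ → Obedient p ur σlo →
      AmbObedient (φ ∘ φr) p ur (fun b : Bool => if b then σbar else σlo) μ ∧
      φs usBP < μ true * φs (expPayoff p us σbar tauStar) +
        μ false * φs (expPayoff p us σlo tauStar)) :=
  robustness_to_ambiguity_aversion_general p us ur φs φr hφs hφr usBP husBP σbar σlo hσbar hσlo μ hμ
    hnd hobed hben
end

section
/- Single-crossing of Φ*: Define Φ*(u) as the supremum of Σ_θ λ_θ Φ_u(σ_θ) over finite families (λ_θ, σ_θ) with λ_θ ≥ 0, Σ_θ λ_θ = 1, each σ_θ an experiment, and Σ_θ λ_θ σ_θ obedient, where Φ_u(σ) := (φ_s(u_s(σ,τ*)) − φ_s(u)) / φ_r'(u_r(σ,τ*)). Then Φ* satisfies single-crossing: for any u > u', if Φ*(u) ≥ 0 then Φ*(u') > 0. Consequently, there exists a unique u ∈ ℝ such that Φ*(u) = 0. -/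
open Finset

/-!
Put `t = φs u`. Every feasible value of `(Φ*(u))` has the form `a - t * b`, where
`a = ∑_θ λ_θ φs(u_s(σ_θ, τ*)) / φr'(u_r(σ_θ, τ*))` and `b = ∑_θ λ_θ / φr'(u_r(σ_θ, τ*))` do not
depend on `u`. Since `φr'` is positive and antitone and receiver payoffs are bounded, `b` lies in
a fixed interval `[c, C]` with `c > 0`. So `Φ*` is `φs` followed by the upper envelope of a
family of lines with slopes in `[-C, -c]`: it drops by at least `c (φs u - φs u')` from `u'` to
`u` (single crossing), and is continuous. It is `≥ 0` at the sender payoff of an obedient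
experiment and `≤ 0` at the maximal sender payoff, so it has a zero, unique by single crossing.
-/

section Payoff

variable {Ω M A : Type*} [Fintype Ω] [Fintype M] [Fintype A]

theorem expPayoff_const {p : Ω → ℝ} (hp : IsProb p) {σ : Ω → M → ℝ} (hσ : IsKernel σ)
    {τ : M → A → ℝ} (hτ : IsKernel τ) (C : ℝ) :
    expPayoff p (fun _ _ => C) σ τ = C := by
  simp only [expPayoff, ← Finset.sum_mul, ← Finset.mul_sum, hτ.2, hσ.2, mul_one, hp.2, one_mul]

theorem expPayoff_mono {p : Ω → ℝ} (hp : ∀ ω, 0 ≤ p ω) {σ : Ω → M → ℝ}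
    (hσ : ∀ ω m, 0 ≤ σ ω m) {τ : M → A → ℝ} (hτ : ∀ m a, 0 ≤ τ m a) {u v : A → Ω → ℝ}
    (huv : ∀ a ω, u a ω ≤ v a ω) : expPayoff p u σ τ ≤ expPayoff p v σ τ := by
  unfold expPayoff
  gcongr with ω _ m _ a _
  · exact mul_nonneg (mul_nonneg (hp ω) (hσ ω m)) (hτ m a)
  · exact huv a ω

end Payoff

section Obedience

variable {Ω A : Type*} [Fintype Ω] [Fintype A] [DecidableEq A]

theorem isKernel_tauStar_s15 : IsKernel (tauStar : A → A → ℝ) :=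
  ⟨fun _ _ => by unfold tauStar; split <;> norm_num, fun _ => by simp [tauStar]⟩

theorem exists_forall_expPayoff_tauStar_le {p : Ω → ℝ} (hp : IsProb p) (u : A → Ω → ℝ) :
    ∃ C, ∀ σ : Ω → A → ℝ, IsKernel σ → expPayoff p u σ tauStar ≤ C := by
  obtain ⟨C, hC⟩ := (Set.finite_range (Function.uncurry u)).bddAbove
  refine ⟨C, fun σ hσ => ?_⟩
  rw [← expPayoff_const hp hσ isKernel_tauStar_s15 C]
  exact expPayoff_mono hp.1 hσ.1 isKernel_tauStar_s15.1 fun a ω => hC ⟨(a, ω), rfl⟩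

theorem exists_forall_le_expPayoff_tauStar {p : Ω → ℝ} (hp : IsProb p) (u : A → Ω → ℝ) :
    ∃ C, ∀ σ : Ω → A → ℝ, IsKernel σ → C ≤ expPayoff p u σ tauStar := by
  obtain ⟨C, hC⟩ := (Set.finite_range (Function.uncurry u)).bddBelow
  refine ⟨C, fun σ hσ => ?_⟩
  rw [← expPayoff_const hp hσ isKernel_tauStar_s15 C]
  exact expPayoff_mono hp.1 hσ.1 isKernel_tauStar_s15.1 fun a ω => hC ⟨(a, ω), rfl⟩

theorem obedient_pooling (p : Ω → ℝ) (ur : A → Ω → ℝ) {a₀ : A}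
    (ha₀ : ∀ a, ∑ ω, p ω * ur a ω ≤ ∑ ω, p ω * ur a₀ ω) :
    Obedient p ur (fun _ a => if a = a₀ then 1 else 0) := by
  intro τ hτ
  have payoff : ∀ τ : A → A → ℝ, expPayoff p ur (fun _ a => if a = a₀ then 1 else 0) τ =
      ∑ a, τ a₀ a * ∑ ω, p ω * ur a ω := by
    intro τ
    simp only [expPayoff, mul_ite, mul_one, mul_zero, ite_mul, zero_mul, Finset.sum_ite_irrel,
      Finset.sum_const_zero, Finset.sum_ite_eq', Finset.mem_univ, ↓reduceIte, Finset.mul_sum]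
    rw [Finset.sum_comm]
    exact Finset.sum_congr rfl fun a _ => Finset.sum_congr rfl fun ω _ => by ring
  calc expPayoff p ur _ τ = ∑ a, τ a₀ a * ∑ ω, p ω * ur a ω := payoff τ
    _ ≤ ∑ a, τ a₀ a * ∑ ω, p ω * ur a₀ ω :=
      Finset.sum_le_sum fun a _ => mul_le_mul_of_nonneg_left (ha₀ a) (hτ.1 a₀ a)
    _ = ∑ a, tauStar a₀ a * ∑ ω, p ω * ur a ω := by
      simp [← Finset.sum_mul, hτ.2, tauStar]
    _ = expPayoff p ur _ tauStar := (payoff tauStar).symm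

theorem exists_obedient [Nonempty A] (p : Ω → ℝ) (ur : A → Ω → ℝ) :
    ∃ σ : Ω → A → ℝ, IsKernel σ ∧ Obedient p ur σ := by
  obtain ⟨a₀, -, ha₀⟩ := Finset.exists_max_image Finset.univ
    (fun a => ∑ ω, p ω * ur a ω) Finset.univ_nonempty
  exact ⟨_, ⟨fun _ _ => by split <;> norm_num, fun _ => by simp⟩,
    obedient_pooling p ur fun a => ha₀ a (Finset.mem_univ a)⟩

end Obedience

section Envelope

def lineValues (T : Set (ℝ × ℝ)) (t : ℝ) : Set ℝ :=
  (fun q : ℝ × ℝ => q.1 - t * q.2) '' T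

variable {T : Set (ℝ × ℝ)}

theorem add_mul_sub_le_of_isLUB_lineValues {c t t' v v' : ℝ} (hT : ∀ q ∈ T, c ≤ q.2)
    (ht : t' ≤ t) (hv : IsLUB (lineValues T t) v) (hv' : IsLUB (lineValues T t') v') :
    v + c * (t - t') ≤ v' := by
  suffices v ≤ v' - c * (t - t') by linarith
  refine hv.2 ?_
  rintro _ ⟨q, hq, rfl⟩
  have hslope : c * (t - t') ≤ q.2 * (t - t') := by gcongr; exact hT q hq
  have := hv'.1 ⟨q, hq, rfl⟩
  dsimp only at this ⊢
  linarith

theorem le_add_mul_abs_of_mem_lineValues {C t t' x : ℝ} (hT : ∀ q ∈ T, q.2 ∈ Set.Icc 0 C)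
    (hx : x ∈ lineValues T t) : ∃ x' ∈ lineValues T t', x ≤ x' + C * |t - t'| := by
  obtain ⟨q, hq, rfl⟩ := hx
  refine ⟨_, ⟨q, hq, rfl⟩, ?_⟩
  have h₀ := (hT q hq).1
  have h₁ := (hT q hq).2
  have : (t' - t) * q.2 ≤ |t - t'| * C := by
    rw [abs_sub_comm]
    exact mul_le_mul (le_abs_self _) h₁ h₀ (abs_nonneg _)
  dsimp only
  linarith

theorem bddAbove_lineValues {C t₀ : ℝ} (hT : ∀ q ∈ T, q.2 ∈ Set.Icc 0 C)
    (h : BddAbove (lineValues T t₀)) (t : ℝ) : BddAbove (lineValues T t) := by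
  obtain ⟨M, hM⟩ := h
  refine ⟨M + C * |t - t₀|, fun x hx => ?_⟩
  obtain ⟨x', hx', hle⟩ := le_add_mul_abs_of_mem_lineValues (t' := t₀) hT hx
  linarith [hM hx']

theorem lipschitzWith_sSup_lineValues {C : ℝ} (hT : ∀ q ∈ T, q.2 ∈ Set.Icc 0 C)
    (hne : T.Nonempty) (hbdd : ∀ t, BddAbove (lineValues T t)) :
    LipschitzWith C.toNNReal fun t => sSup (lineValues T t) := by
  refine LipschitzWith.of_le_add_mul' C fun t t' => csSup_le (hne.image _) fun x hx => ?_
  obtain ⟨x', hx', hle⟩ := le_add_mul_abs_of_mem_lineValues (t' := t') hT hx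
  rw [Real.dist_eq]
  linarith [le_csSup (hbdd t') hx']

theorem exists_isLUB_lineValues_zero {C u₀ u₁ : ℝ} {g : ℝ → ℝ} (hg : Continuous g)
    (hT : ∀ q ∈ T, q.2 ∈ Set.Icc 0 C) (hu : u₀ ≤ u₁) (h₀ : 0 ∈ lineValues T (g u₀))
    (h₁ : 0 ∈ upperBounds (lineValues T (g u₁))) :
    ∃ u ∈ Set.Icc u₀ u₁, IsLUB (lineValues T (g u)) 0 := by
  have hne : T.Nonempty := (Set.image_nonempty).1 ⟨0, h₀⟩
  have hbdd := bddAbove_lineValues hT ⟨0, h₁⟩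
  have hcont : Continuous fun u => sSup (lineValues T (g u)) :=
    (lipschitzWith_sSup_lineValues hT hne hbdd).continuous.comp hg
  obtain ⟨u, hu, hzero⟩ := intermediate_value_Icc' hu hcont.continuousOn
    ⟨csSup_le (hne.image _) h₁, le_csSup (hbdd _) h₀⟩
  exact ⟨u, hu, hzero ▸ isLUB_csSup (hne.image _) (hbdd _)⟩

end Envelope

section Program

variable {Ω A : Type*} [Fintype Ω] [Fintype A] [DecidableEq A]

/-- For every feasible splitting, the pair `(a, b)` with `∑_θ λ_θ Φ_u(σ_θ) = a - φs u * b`. -/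
def splittingCoeffs (φs φr : ℝ → ℝ) (p : Ω → ℝ) (us ur : A → Ω → ℝ) : Set (ℝ × ℝ) :=
  {q | ∃ (n : ℕ) (σ : Fin n → Ω → A → ℝ) (lam : Fin n → ℝ),
    (∀ j, IsKernel (σ j)) ∧ IsProb lam ∧
    Obedient p ur (fun ω a => ∑ j, lam j * σ j ω a) ∧
    q = (∑ j, lam j * (φs (expPayoff p us (σ j) tauStar) /
          deriv φr (expPayoff p ur (σ j) tauStar)),
        ∑ j, lam j * (deriv φr (expPayoff p ur (σ j) tauStar))⁻¹)}

theorem phiProgram_eq_lineValues (φs φr : ℝ → ℝ) (p : Ω → ℝ) (us ur : A → Ω → ℝ) (u : ℝ) :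
    phiProgram φs φr p us ur u = lineValues (splittingCoeffs φs φr p us ur) (φs u) := by
  have split : ∀ (n : ℕ) (lam s d : Fin n → ℝ),
      ∑ j, lam j * ((s j - φs u) / d j) =
        ∑ j, lam j * (s j / d j) - φs u * ∑ j, lam j * (d j)⁻¹ := by
    intro n lam s d
    rw [Finset.mul_sum, ← Finset.sum_sub_distrib]
    exact Finset.sum_congr rfl fun j _ => by ring
  ext x
  constructor
  · rintro ⟨n, σ, lam, hσ, hlam, hob, rfl⟩
    exact ⟨_, ⟨n, σ, lam, hσ, hlam, hob, rfl⟩, (split n lam _ _).symm⟩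
  · rintro ⟨_, ⟨n, σ, lam, hσ, hlam, hob, rfl⟩, rfl⟩
    exact ⟨n, σ, lam, hσ, hlam, hob, (split n lam _ _).symm⟩

/-- `φr'` is positive and antitone on the bounded range of receiver payoffs. -/
theorem exists_forall_splittingCoeffs_snd_mem_Icc (φs : ℝ → ℝ) {φr : ℝ → ℝ} {p : Ω → ℝ}
    (hp : IsProb p) (us ur : A → Ω → ℝ) (hφr : ConcaveOn ℝ Set.univ φr)
    (hφr_diff : Differentiable ℝ φr) (hφr' : ∀ x, 0 < deriv φr x) :
    ∃ c C, 0 < c ∧ ∀ q ∈ splittingCoeffs φs φr p us ur, q.2 ∈ Set.Icc c C := by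
  obtain ⟨m, hm⟩ := exists_forall_le_expPayoff_tauStar hp ur
  obtain ⟨M, hM⟩ := exists_forall_expPayoff_tauStar_le hp ur
  have hanti : AntitoneOn (deriv φr) Set.univ := hφr.antitoneOn_deriv fun x _ => hφr_diff x
  refine ⟨(deriv φr m)⁻¹, (deriv φr M)⁻¹, inv_pos.2 (hφr' m), ?_⟩
  rintro _ ⟨n, σ, lam, hσ, hlam, -, rfl⟩
  refine (convex_Icc _ _).sum_mem (fun j _ => hlam.1 j) hlam.2 fun j _ => ⟨?_, ?_⟩
  · exact inv_anti₀ (hφr' _) (hanti trivial trivial (hm _ (hσ j)))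
  · exact inv_anti₀ (hφr' _) (hanti trivial trivial (hM _ (hσ j)))

theorem zero_mem_phiProgram (φs φr : ℝ → ℝ) (p : Ω → ℝ) (us ur : A → Ω → ℝ) {σ : Ω → A → ℝ}
    (hσ : IsKernel σ) (hob : Obedient p ur σ) :
    0 ∈ phiProgram φs φr p us ur (expPayoff p us σ tauStar) :=
  ⟨1, fun _ => σ, fun _ => 1, fun _ => hσ, ⟨fun _ => zero_le_one, by simp⟩, by simpa using hob,
    by simp⟩

theorem zero_mem_upperBounds_phiProgram {φs φr : ℝ → ℝ} {p : Ω → ℝ} {us : A → Ω → ℝ}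
    (ur : A → Ω → ℝ) {M : ℝ} (hφs : Monotone φs) (hφr' : ∀ x, 0 ≤ deriv φr x)
    (hM : ∀ σ : Ω → A → ℝ, IsKernel σ → expPayoff p us σ tauStar ≤ M) :
    0 ∈ upperBounds (phiProgram φs φr p us ur M) := by
  rintro _ ⟨n, σ, lam, hσ, hlam, -, rfl⟩
  refine Finset.sum_nonpos fun j _ => mul_nonpos_of_nonneg_of_nonpos (hlam.1 j) ?_
  exact div_nonpos_of_nonpos_of_nonneg (sub_nonpos.2 (hφs (hM _ (hσ j)))) (hφr' _)

end Program

theorem phiStar_single_crossing_general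
    {Ω A : Type*} [Fintype Ω] [Fintype A] [DecidableEq A] [Nonempty A]
    (p : Ω → ℝ) (hp : IsProb p) (us ur : A → Ω → ℝ)
    (φs φr : ℝ → ℝ) (hφs : SmoothIndex φs) (hφr : SmoothIndex φr)
    (hφr' : ∀ x, 0 < deriv φr x) :
    (∀ u u' v v' : ℝ, u' < u →
      IsLUB (phiProgram φs φr p us ur u) v → IsLUB (phiProgram φs φr p us ur u') v' →
      0 ≤ v → 0 < v') ∧
    ∃! u : ℝ, IsLUB (phiProgram φs φr p us ur u) 0 := by
  obtain ⟨hφs_mono, -, hφs_diff⟩ := hφs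
  obtain ⟨c, C, hc, hT⟩ :=
    exists_forall_splittingCoeffs_snd_mem_Icc φs hp us ur hφr.2.1 hφr.2.2 hφr'
  have crossing : ∀ u u' v v' : ℝ, u' < u →
      IsLUB (phiProgram φs φr p us ur u) v → IsLUB (phiProgram φs φr p us ur u') v' →
      0 ≤ v → 0 < v' := by
    intro u u' v v' hu hv hv' hv₀
    rw [phiProgram_eq_lineValues] at hv hv'
    have hdrop := add_mul_sub_le_of_isLUB_lineValues (fun q hq => (hT q hq).1)
      (hφs_mono hu).le hv hv'
    linarith [mul_pos hc (sub_pos.2 (hφs_mono hu))]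
  refine ⟨crossing, ?_⟩
  obtain ⟨σ₀, hσ₀, hob⟩ := exists_obedient p ur
  obtain ⟨M, hM⟩ := exists_forall_expPayoff_tauStar_le hp us
  have h₀ := zero_mem_phiProgram φs φr p us ur hσ₀ hob
  have h₁ := zero_mem_upperBounds_phiProgram ur hφs_mono.monotone (fun x => (hφr' x).le) hM
  rw [phiProgram_eq_lineValues] at h₀ h₁
  obtain ⟨u, -, hu⟩ := exists_isLUB_lineValues_zero hφs_diff.continuous
    (fun q hq => ⟨hc.le.trans (hT q hq).1, (hT q hq).2⟩) (hM σ₀ hσ₀) h₀ h₁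
  rw [← phiProgram_eq_lineValues] at hu
  refine ⟨u, hu, fun y hy => le_antisymm ?_ ?_⟩
  · exact not_lt.1 fun h => (crossing y u 0 0 h hy hu le_rfl).false
  · exact not_lt.1 fun h => (crossing u y 0 0 h hu hy le_rfl).false

/-- Lemma A.1, single-crossing of `Φ*`: for `u' < u`, if the value of the
program `(Φ*(u))` is `≥ 0` then the value of `(Φ*(u'))` is `> 0` (values stated as least
upper bounds of the feasible sets); consequently there is a unique `u` with `Φ*(u) = 0`. -/
theorem phiStar_single_crossing
    {Ω A : Type*} [Fintype Ω] [Fintype A] [DecidableEq A] [Nonempty Ω] [Nonempty A]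
    (p : Ω → ℝ) (hp : IsProb p) (us ur : A → Ω → ℝ)
    (φs φr : ℝ → ℝ) (hφs : SmoothIndex φs) (hφr : SmoothIndex φr)
    (hφr' : ∀ x, 0 < deriv φr x) :
    (∀ u u' v v' : ℝ, u' < u →
      IsLUB (phiProgram φs φr p us ur u) v → IsLUB (phiProgram φs φr p us ur u') v' →
      0 ≤ v → 0 < v') ∧
    ∃! u : ℝ, IsLUB (phiProgram φs φr p us ur u) 0 :=
  phiStar_single_crossing_general p hp us ur φs φr hφs hφr hφr'
end

section
/- Pessimistic reweighting strictly lowers expectation: Fix n ≥ 2, real sequences x₁ ≥ x₂ ≥ … ≥ x_n and 0 < y₁ ≤ y₂ ≤ … ≤ y_n, and a probability vector μ ∈ Δ({1,…,n}). Assume there exist indices i* < j* with μ_{i*} > 0, μ_{j*} > 0, x_{i*} > x_{j*}, and y_{i*} < y_{j*}. Then Σ_{i=1}^{n} x_i · (μ_i y_i / Σ_{j=1}^{n} μ_j y_j) < Σ_{i=1}^{n} x_i μ_i. -/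
/-! Writing `S = ∑ μ_j y_j`, the claim is `∑ μ_i x_i y_i < (∑ μ_i x_i) S`, i.e. the
`μ`-covariance of `x` and `y` is negative. Twice that covariance is
`∑_{i,j} μ_i μ_j (x_j - x_i)(y_j - y_i)`, a sum of nonpositive terms because `x` and `y` vary in
opposite directions, and the term at `(i*, j*)` is strictly negative. -/

open Finset

section WeightedChebyshev

variable {ι R : Type*} [Fintype ι]

theorem sum_sum_mul_mul_sub_mul_sub [CommRing R] (μ f g : ι → R) :
    ∑ i, ∑ j, μ i * μ j * ((f j - f i) * (g j - g i)) =
      2 * ((∑ i, μ i) * ∑ i, μ i * (f i * g i) - (∑ i, μ i * f i) * ∑ i, μ i * g i) := by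
  have hterm : ∀ i j, μ i * μ j * ((f j - f i) * (g j - g i)) =
      μ i * (μ j * (f j * g j)) + μ i * (f i * g i) * μ j
        - μ i * f i * (μ j * g j) - μ i * g i * (μ j * f j) := fun i j => by ring
  simp only [hterm, sum_sub_distrib, sum_add_distrib, ← mul_sum, ← sum_mul]
  ring

theorem Antivary.weighted_card_mul_sum_lt_sum_mul_sum [CommRing R] [LinearOrder R]
    [IsStrictOrderedRing R] {μ f g : ι → R} (hfg : Antivary f g) (hμ : ∀ i, 0 ≤ μ i)
    {a b : ι} (ha : 0 < μ a) (hb : 0 < μ b) (hab : (f b - f a) * (g b - g a) < 0) :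
    (∑ i, μ i) * ∑ i, μ i * (f i * g i) < (∑ i, μ i * f i) * ∑ i, μ i * g i := by
  have hneg : ∑ p : ι × ι, μ p.1 * μ p.2 * ((f p.2 - f p.1) * (g p.2 - g p.1)) < 0 :=
    sum_neg' (fun p _ => mul_nonpos_of_nonneg_of_nonpos (mul_nonneg (hμ _) (hμ _))
        (hfg.sub_mul_sub_nonpos _ _))
      ⟨(a, b), mem_univ _, mul_neg_of_pos_of_neg (mul_pos ha hb) hab⟩
  rw [Fintype.sum_prod_type, sum_sum_mul_mul_sub_mul_sub] at hneg
  linarith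

end WeightedChebyshev

theorem pessimistic_reweighting_lowers_expectation_general
    (n : ℕ) (x y μ : Fin n → ℝ)
    (hx : ∀ i j : Fin n, i ≤ j → x j ≤ x i)
    (hy0 : ∀ i, 0 < y i) (hy : ∀ i j : Fin n, i ≤ j → y i ≤ y j)
    (hμ0 : ∀ i, 0 ≤ μ i) (hμ1 : ∑ i, μ i = 1)
    (istar jstar : Fin n)
    (hμi : 0 < μ istar) (hμj : 0 < μ jstar)
    (hxij : x jstar < x istar) (hyij : y istar < y jstar) :
    ∑ i, x i * (μ i * y i / ∑ j, μ j * y j) < ∑ i, x i * μ i := by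
  have hS : 0 < ∑ j, μ j * y j :=
    sum_pos' (fun i _ => mul_nonneg (hμ0 i) (hy0 i).le) ⟨istar, mem_univ _, mul_pos hμi (hy0 istar)⟩
  have hcov := (Antitone.antivary hx hy).weighted_card_mul_sum_lt_sum_mul_sum hμ0 hμi hμj
    (mul_neg_of_neg_of_pos (sub_neg.2 hxij) (sub_pos.2 hyij))
  rw [hμ1, one_mul] at hcov
  calc ∑ i, x i * (μ i * y i / ∑ j, μ j * y j)
      = (∑ i, μ i * (x i * y i)) / ∑ j, μ j * y j := by
        rw [sum_div]; exact sum_congr rfl fun i _ => by ring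
    _ < ∑ i, x i * μ i := by
        rw [div_lt_iff₀ hS]; simpa only [mul_comm (x _)] using hcov

/-- Lemma A.6: pessimistic reweighting strictly lowers the expectation of
a decreasing sequence `x` by the weights proportional to `μ_i y_i` with `y` positive
increasing, provided some pair of indices carries positive weight and strict movement. -/
theorem pessimistic_reweighting_lowers_expectation
    (n : ℕ) (hn : 2 ≤ n) (x y μ : Fin n → ℝ)
    (hx : ∀ i j : Fin n, i ≤ j → x j ≤ x i)
    (hy0 : ∀ i, 0 < y i) (hy : ∀ i j : Fin n, i ≤ j → y i ≤ y j)
    (hμ0 : ∀ i, 0 ≤ μ i) (hμ1 : ∑ i, μ i = 1)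
    (istar jstar : Fin n) (hij : istar < jstar)
    (hμi : 0 < μ istar) (hμj : 0 < μ jstar)
    (hxij : x jstar < x istar) (hyij : y istar < y jstar) :
    ∑ i, x i * (μ i * y i / ∑ j, μ j * y j) < ∑ i, x i * μ i :=
  pessimistic_reweighting_lowers_expectation_general n x y μ hx hy0 hy hμ0 hμ1 istar jstar hμi hμj
    hxij hyij
end
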